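/- arXiv:2105.01265 — 6 statements merged into one kernel-verified Lean document; each statement's English description precedes it below -/
import Mathlib

section
/- Let G be a finite simple graph with m edges, and for each edge e = {u,v} of G let f(e) = min(deg(u), deg(v)). Then the sum of f(e) over all edges e of G is at most 4·m^{3/2}. -/
/-!
Charge each edge to its endpoint of smaller degree. Then the sum is at most `∑ v, deg v * c v`,
where `c v` counts the neighbours of `v` of degree at least `deg v`. Each term is at most
`deg v ^ 2` (as `c v ≤ deg v`) and at most `2m` (as these `c v` neighbours have degree at least
`deg v` each), hence at most `deg v * √(2m)`; by the handshaking lemma the total is at most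
`2m * √(2m) ≤ 4 * m ^ (3/2)`.
-/

/-- The minimum of the degrees of the two endpoints of an edge. -/
def edgeMinDeg {V : Type*} [Fintype V] (G : SimpleGraph V) [DecidableRel G.Adj]
    (e : Sym2 V) : ℕ :=
  Sym2.lift ⟨fun u v => min (G.degree u) (G.degree v), fun u v => min_comm _ _⟩ e

open Finset

lemma Real.le_mul_sqrt_of_le_sq_of_le {a b c : ℝ} (ha : 0 ≤ a) (hb : 0 ≤ b) (hab : a ≤ b ^ 2)
    (hac : a ≤ c) : a ≤ b * √c := by
  have hc : 0 ≤ c := ha.trans hac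
  rw [← Real.sqrt_sq hb, ← Real.sqrt_mul (sq_nonneg b), Real.le_sqrt ha (by positivity), sq]
  exact mul_le_mul hab hac ha (sq_nonneg b)

lemma Real.two_mul_mul_sqrt_two_mul_le {x : ℝ} (hx : 0 ≤ x) :
    2 * x * √(2 * x) ≤ 4 * x ^ ((3 : ℝ) / 2) := by
  have hsqrt_two : √2 ≤ 2 := by
    rw [Real.sqrt_le_left (by norm_num)]
    norm_num
  have hpow : x ^ ((3 : ℝ) / 2) = x * √x := by
    rw [Real.sqrt_eq_rpow, show (3 : ℝ) / 2 = 1 + 1 / 2 by norm_num,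
      Real.rpow_add' hx (by norm_num), Real.rpow_one]
  rw [hpow, Real.sqrt_mul zero_le_two]
  nlinarith [mul_nonneg hx (Real.sqrt_nonneg x)]

lemma edgeMinDeg_mk {V : Type*} [Fintype V] (G : SimpleGraph V) [DecidableRel G.Adj] (u v : V) :
    edgeMinDeg G s(u, v) = min (G.degree u) (G.degree v) :=
  rfl

namespace SimpleGraph

variable {V : Type*} [Fintype V] (G : SimpleGraph V) [DecidableRel G.Adj]

def upperNeighborFinset (v : V) : Finset V :=
  {w ∈ G.neighborFinset v | G.degree v ≤ G.degree w}

lemma card_upperNeighborFinset_le_degree (v : V) :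
    #(G.upperNeighborFinset v) ≤ G.degree v :=
  (card_filter_le _ _).trans_eq (G.card_neighborFinset_eq_degree v)

lemma degree_mul_card_upperNeighborFinset_le_two_mul_card_edgeFinset (v : V) :
    G.degree v * #(G.upperNeighborFinset v) ≤ 2 * #G.edgeFinset :=
  calc G.degree v * #(G.upperNeighborFinset v)
      = ∑ _w ∈ G.upperNeighborFinset v, G.degree v := by rw [sum_const, smul_eq_mul, mul_comm]
    _ ≤ ∑ w ∈ G.upperNeighborFinset v, G.degree w := sum_le_sum fun _w hw => (mem_filter.mp hw).2
    _ ≤ ∑ w, G.degree w := sum_le_sum_of_subset (subset_univ _)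
    _ = 2 * #G.edgeFinset := G.sum_degrees_eq_twice_card_edges

lemma degree_mul_card_upperNeighborFinset_le_degree_mul_sqrt (v : V) :
    (G.degree v * #(G.upperNeighborFinset v) : ℝ) ≤ G.degree v * √(2 * #G.edgeFinset) := by
  apply Real.le_mul_sqrt_of_le_sq_of_le (by positivity) (by positivity)
  · rw [sq]
    exact_mod_cast Nat.mul_le_mul_left _ (G.card_upperNeighborFinset_le_degree v)
  · exact_mod_cast G.degree_mul_card_upperNeighborFinset_le_two_mul_card_edgeFinset v

lemma edgeFinset_subset_image_upperNeighborFinset [DecidableEq V] :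
    G.edgeFinset ⊆ (univ.sigma G.upperNeighborFinset).image fun p => s(p.1, p.2) := by
  intro e he
  induction e using Sym2.ind with
  | h u v =>
    have huv : G.Adj u v := by simpa using he
    simp only [mem_image, mem_sigma, mem_univ, true_and, upperNeighborFinset, mem_filter,
      mem_neighborFinset, Sigma.exists]
    rcases le_total (G.degree u) (G.degree v) with h | h
    · exact ⟨u, v, ⟨huv, h⟩, rfl⟩
    · exact ⟨v, u, ⟨huv.symm, h⟩, Sym2.eq_swap⟩

lemma sum_edgeMinDeg_le_sum_degree_mul_card_upperNeighborFinset [DecidableEq V] :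
    ∑ e ∈ G.edgeFinset, edgeMinDeg G e ≤ ∑ v, G.degree v * #(G.upperNeighborFinset v) :=
  calc ∑ e ∈ G.edgeFinset, edgeMinDeg G e
      ≤ ∑ e ∈ (univ.sigma G.upperNeighborFinset).image (fun p => s(p.1, p.2)), edgeMinDeg G e :=
        sum_le_sum_of_subset G.edgeFinset_subset_image_upperNeighborFinset
    _ ≤ ∑ p ∈ univ.sigma G.upperNeighborFinset, edgeMinDeg G s(p.1, p.2) :=
        sum_image_le_of_nonneg fun _ _ => Nat.zero_le _
    _ = ∑ p ∈ univ.sigma G.upperNeighborFinset, G.degree p.1 :=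
        sum_congr rfl fun p hp => by
          rw [edgeMinDeg_mk, min_eq_left (mem_filter.mp (mem_sigma.mp hp).2).2]
    _ = ∑ v, G.degree v * #(G.upperNeighborFinset v) := by
        rw [sum_sigma]
        exact sum_congr rfl fun v _ =>
          (sum_const_nat (m := G.degree v) fun _ _ => rfl).trans (mul_comm _ _)

end SimpleGraph

theorem sum_min_degree_le_general {V : Type*} [Fintype V]
    (G : SimpleGraph V) [DecidableRel G.Adj] :
    ((∑ e ∈ G.edgeFinset, edgeMinDeg G e : ℕ) : ℝ)
      ≤ 4 * (G.edgeFinset.card : ℝ) ^ ((3 : ℝ) / 2) := by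
  classical
  set m := #G.edgeFinset
  calc ((∑ e ∈ G.edgeFinset, edgeMinDeg G e : ℕ) : ℝ)
      ≤ ∑ v, (G.degree v * #(G.upperNeighborFinset v) : ℝ) := by
        exact_mod_cast G.sum_edgeMinDeg_le_sum_degree_mul_card_upperNeighborFinset
    _ ≤ ∑ v, G.degree v * √(2 * m) :=
        sum_le_sum fun v _ => G.degree_mul_card_upperNeighborFinset_le_degree_mul_sqrt v
    _ = 2 * m * √(2 * m) := by
        rw [← sum_mul, ← Nat.cast_sum, G.sum_degrees_eq_twice_card_edges]
        push_cast
        rfl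
    _ ≤ 4 * (m : ℝ) ^ ((3 : ℝ) / 2) := Real.two_mul_mul_sqrt_two_mul_le m.cast_nonneg

/-- For a finite simple graph `G` with `m` edges,
the sum over all edges `{u,v}` of `min (deg u) (deg v)` is at most `4 * m^(3/2)`. -/
theorem sum_min_degree_le {V : Type*} [Fintype V] [DecidableEq V]
    (G : SimpleGraph V) [DecidableRel G.Adj] :
    ((∑ e ∈ G.edgeFinset, edgeMinDeg G e : ℕ) : ℝ)
      ≤ 4 * (G.edgeFinset.card : ℝ) ^ ((3 : ℝ) / 2) :=
  sum_min_degree_le_general G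
end

section
/- Let G be a finite simple graph with m edges whose edge set can be partitioned into k subsets, each of which forms an acyclic subgraph (a forest) on the vertex set of G. Then the sum over all edges {u,v} of G of min(deg(u), deg(v)) is at most 2·k·m. -/
open Finset SimpleGraph

theorem Finset.sum_le_sum_sum_filter_of_forall_exists_mem {ι α M : Type*} [Fintype ι]
    [AddCommMonoid M] [PartialOrder M] [IsOrderedAddMonoid M] [CanonicallyOrderedAdd M]
    (s : Finset α) (t : ι → Set α) [∀ i, DecidablePred (· ∈ t i)]
    (h : ∀ a ∈ s, ∃ i, a ∈ t i) (f : α → M) :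
    ∑ a ∈ s, f a ≤ ∑ i, ∑ a ∈ s with a ∈ t i, f a := by
  calc ∑ a ∈ s, f a ≤ ∑ a ∈ s, ∑ i with a ∈ t i, f a := by
        refine sum_le_sum fun a ha ↦ ?_
        obtain ⟨i, hi⟩ := h a ha
        exact single_le_sum (f := fun _ ↦ f a) (fun _ _ ↦ zero_le) (by simpa using hi)
    _ = ∑ i, ∑ a ∈ s with a ∈ t i, f a := by
        simp only [sum_filter]
        exact sum_comm

namespace SimpleGraph

variable {V : Type*} {H : SimpleGraph V}

theorem IsAcyclic.eq_of_adj_of_dist_eq_add_one (hH : H.IsAcyclic) {u v w₁ w₂ : V}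
    (h₁ : H.Adj v w₁) (h₂ : H.Adj v w₂) (hd₁ : H.dist u v = H.dist u w₁ + 1)
    (hd₂ : H.dist u v = H.dist u w₂ + 1) : w₁ = w₂ := by
  have huv : H.Reachable u v := Reachable.of_dist_ne_zero (by omega)
  obtain ⟨p₁, -, hp₁⟩ := (huv.trans h₁.reachable).exists_path_of_dist
  obtain ⟨p₂, -, hp₂⟩ := (huv.trans h₂.reachable).exists_path_of_dist
  have hq₁ := (p₁.concat h₁.symm).isPath_of_length_eq_dist (by simp [hp₁, hd₁])
  have hq₂ := (p₂.concat h₂.symm).isPath_of_length_eq_dist (by simp [hp₂, hd₂])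
  have := congrArg (fun q : H.Path u v ↦ q.1.penultimate)
    ((hH.subsingleton_path u v).elim ⟨_, hq₁⟩ ⟨_, hq₂⟩)
  simpa [Walk.penultimate_concat] using this

theorem IsAcyclic.exists_injOn_mem_edgeSet (hH : H.IsAcyclic) :
    ∃ f : Sym2 V → V, Set.InjOn f H.edgeSet ∧ ∀ e ∈ H.edgeSet, f e ∈ e := by
  let root (v : V) : V := (H.connectedComponentMk v).out
  have reachable_root (v : V) : H.Reachable (root v) v :=
    ConnectedComponent.eq.mp (H.connectedComponentMk v).out_eq
  have root_eq {a b : V} (h : H.Adj a b) : root a = root b := by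
    simp only [root, ConnectedComponent.eq.mpr h.reachable]
  have exists_child (e : Sym2 V) : ∃ v w, e = s(v, w) ∧
      (H.Adj v w → H.dist (root v) v = H.dist (root v) w + 1) := by
    induction e using Sym2.ind with | _ a b => ?_
    by_cases hab : H.Adj a b
    · rcases hH.dist_eq_dist_add_one_of_adj_of_reachable (root a) hab (reachable_root a) with h | h
      · exact ⟨a, b, rfl, fun _ ↦ h⟩
      · exact ⟨b, a, Sym2.eq_swap, fun _ ↦ by rwa [← root_eq hab]⟩
    · exact ⟨a, b, rfl, fun h ↦ absurd h hab⟩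
  choose f g hfg hdist using exists_child
  have hadj {e : Sym2 V} (he : e ∈ H.edgeSet) : H.Adj (f e) (g e) := by rwa [hfg e] at he
  refine ⟨f, fun e₁ he₁ e₂ he₂ hf ↦ ?_, fun e _ ↦ ?_⟩
  · have hg : g e₁ = g e₂ := hH.eq_of_adj_of_dist_eq_add_one (u := root (f e₂))
      (hf ▸ hadj he₁) (hadj he₂) (hf ▸ hdist e₁ (hadj he₁)) (hdist e₂ (hadj he₂))
    rw [hfg e₁, hfg e₂, hf, hg]
  · have := Sym2.mem_mk_left (f e) (g e)
    rwa [← hfg e] at this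

variable [Fintype V] (G : SimpleGraph V) [DecidableRel G.Adj]

theorem edgeMinDeg_le_degree {e : Sym2 V} {v : V} (hv : v ∈ e) : edgeMinDeg G e ≤ G.degree v := by
  induction e using Sym2.ind with | _ a b => ?_
  rcases Sym2.mem_iff.mp hv with rfl | rfl
  · exact min_le_left _ _
  · exact min_le_right _ _

theorem IsAcyclic.sum_edgeMinDeg_le_sum_degree (hH : H.IsAcyclic) {T : Finset (Sym2 V)}
    (hT : ↑T ⊆ H.edgeSet) : ∑ e ∈ T, edgeMinDeg G e ≤ ∑ v, G.degree v := by
  classical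
  obtain ⟨f, hinj, hf⟩ := hH.exists_injOn_mem_edgeSet
  calc ∑ e ∈ T, edgeMinDeg G e ≤ ∑ e ∈ T, G.degree (f e) :=
        sum_le_sum fun e he ↦ edgeMinDeg_le_degree G (hf e (hT he))
    _ = ∑ v ∈ T.image f, G.degree v := by
        rw [sum_image fun _ h₁ _ h₂ ↦ hinj (hT h₁) (hT h₂)]
    _ ≤ ∑ v, G.degree v := sum_le_sum_of_subset (subset_univ _)

end SimpleGraph

theorem sum_min_degree_le_of_forest_partition_general {V : Type*} [Fintype V]
    (G : SimpleGraph V) [DecidableRel G.Adj] (k : ℕ) (F : Fin k → Set (Sym2 V))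
    (hunion : ⋃ i, F i = G.edgeSet)
    (hforest : ∀ i, (SimpleGraph.fromEdgeSet (F i)).IsAcyclic) :
    ∑ e ∈ G.edgeFinset, edgeMinDeg G e ≤ 2 * k * G.edgeFinset.card := by
  classical
  have hcover (e) (he : e ∈ G.edgeFinset) : ∃ i, e ∈ F i :=
    Set.mem_iUnion.mp (hunion ▸ mem_edgeFinset.mp he)
  have hforest_sum (i) : ∑ e ∈ G.edgeFinset with e ∈ F i, edgeMinDeg G e ≤ 2 * #G.edgeFinset := by
    rw [← sum_degrees_eq_twice_card_edges]
    refine (hforest i).sum_edgeMinDeg_le_sum_degree G fun e he ↦ ?_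
    rw [coe_filter, Set.mem_ofPred_eq, mem_edgeFinset] at he
    rw [edgeSet_fromEdgeSet]
    exact ⟨he.2, G.not_isDiag_of_mem_edgeSet he.1⟩
  calc ∑ e ∈ G.edgeFinset, edgeMinDeg G e
      ≤ ∑ i, ∑ e ∈ G.edgeFinset with e ∈ F i, edgeMinDeg G e :=
        sum_le_sum_sum_filter_of_forall_exists_mem _ _ hcover _
    _ ≤ ∑ _i : Fin k, 2 * #G.edgeFinset := sum_le_sum fun i _ ↦ hforest_sum i
    _ = 2 * k * #G.edgeFinset := by simp [mul_assoc, mul_left_comm]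

/-- If the edge set of a finite simple graph `G` with `m` edges can be partitioned into
`k` forests, then the sum over all edges `{u,v}` of `min (deg u) (deg v)` is at most
`2 * k * m`. -/
theorem sum_min_degree_le_of_forest_partition {V : Type*} [Fintype V] [DecidableEq V]
    (G : SimpleGraph V) [DecidableRel G.Adj] (k : ℕ) (F : Fin k → Set (Sym2 V))
    (hdisj : Pairwise (Function.onFun Disjoint F))
    (hunion : ⋃ i, F i = G.edgeSet)
    (hforest : ∀ i, (SimpleGraph.fromEdgeSet (F i)).IsAcyclic) :
    ∑ e ∈ G.edgeFinset, edgeMinDeg G e ≤ 2 * k * G.edgeFinset.card :=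
  sum_min_degree_le_of_forest_partition_general G k F hunion hforest
end

section
/- Let G be a finite simple graph with m edges whose edge set can be partitioned into k subsets, each of which forms an acyclic subgraph (a forest) on the vertex set of G. Then the number of triangles of G is at most (2/3)·k·m. -/
/-!
Rooting each component of a forest, every edge joins a vertex to its parent, so an edge of the
`i`-th forest is determined by `i` and its lower endpoint `u`. A triangle together with one of its
edges `uv ∈ Fᵢ` (with `v` the parent of `u`) is therefore recovered from `i` and the dart from `u` to
the opposite vertex. Every triangle arises in this way three times, from pairs in `Fin k × G.Dart`,
a set of size `2km`.
-/

open Finset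

namespace SimpleGraph

variable {V : Type*} {G : SimpleGraph V}

theorem IsAcyclic.eq_penultimate_or_eq_penultimate (hG : G.IsAcyclic) {x u v : V}
    {p : G.Walk x u} {q : G.Walk x v} (hp : p.IsPath) (hq : q.IsPath) (huv : G.Adj u v) :
    v = p.penultimate ∨ u = q.penultimate := by
  by_cases hv : v ∈ p.support
  · exact .inl (hG.eq_penultimate_of_adj_end hp huv hv)
  · exact .inr <| hG.eq_penultimate_of_adj_end hq huv.symm <|
      hG.mem_support_of_ne_mem_support_of_adj_of_isPath hq hp huv.symm hv

theorem IsAcyclic.exists_parent (hG : G.IsAcyclic) :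
    ∃ parent : V → V, ∀ ⦃u v⦄, G.Adj u v → v = parent u ∨ u = parent v := by
  let root : V → V := fun v ↦ (G.connectedComponentMk v).out
  have hroot : ∀ v, ∃ p : G.Walk (root v) v, p.IsPath := fun v ↦
    (ConnectedComponent.exact (G.connectedComponentMk v).out_eq).exists_isPath
  choose path hpath using hroot
  refine ⟨fun v ↦ (path v).penultimate, fun u v huv ↦ ?_⟩
  have hr : root v = root u := by
    simp only [root, ConnectedComponent.connectedComponentMk_eq_of_adj huv]
  simpa using hG.eq_penultimate_or_eq_penultimate (hpath u)
    ((Walk.isPath_copy _ _ _).mpr (hpath v) : ((path v).copy hr rfl).IsPath) huv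

theorem IsNClique.exists_eq_insert_pair [DecidableEq V] {t : Finset V} {c : V}
    (ht : G.IsNClique 3 t) (hc : c ∈ t) :
    ∃ a b, G.Adj a b ∧ G.Adj a c ∧ G.Adj b c ∧ t = {c, a, b} := by
  obtain ⟨a, b, hab, he⟩ := card_eq_two.1 (ht.erase_of_mem hc).card_eq
  have hmem : a ∈ t.erase c ∧ b ∈ t.erase c := by simp [he]
  simp only [mem_erase] at hmem
  exact ⟨a, b, ht.isClique hmem.1.2 hmem.2.2 hab, ht.isClique hmem.1.2 hc hmem.1.1,
    ht.isClique hmem.2.2 hc hmem.2.1, by rw [← he, insert_erase hc]⟩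

variable [Fintype V] [DecidableEq V] [DecidableRel G.Adj]

theorem three_mul_card_cliqueFinset_three_le {ι : Type*} [Fintype ι] (parent : ι → V → V)
    (hparent : ∀ ⦃u v⦄, G.Adj u v → ∃ i, v = parent i u ∨ u = parent i v) :
    3 * #(G.cliqueFinset 3) ≤ Fintype.card ι * (2 * #G.edgeFinset) := by
  let span : ι × G.Dart → Finset V := fun x ↦ {x.2.snd, x.2.fst, parent x.1 x.2.fst}
  have hfiber : ∀ t ∈ G.cliqueFinset 3, 3 ≤ #{x | span x = t} := by
    intro t ht
    rw [mem_cliqueFinset_iff] at ht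
    rw [← ht.card_eq]
    refine card_le_card_of_surjOn (fun x ↦ x.2.snd) fun c hc ↦ ?_
    obtain ⟨a, b, hab, hac, hbc, rfl⟩ := ht.exists_eq_insert_pair hc
    obtain ⟨i, rfl | rfl⟩ := hparent hab
    · exact ⟨(i, ⟨(a, c), hac⟩), by simp [span], rfl⟩
    · exact ⟨(i, ⟨(b, c), hbc⟩), by simp [span, pair_comm], rfl⟩
  calc 3 * #(G.cliqueFinset 3) ≤ #{x | span x ∈ G.cliqueFinset 3} :=
        mul_card_image_le_card_of_maps_to (fun x hx ↦ (mem_filter.1 hx).2) 3 fun t ht ↦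
          (hfiber t ht).trans <| card_le_card fun x hx ↦ by
            simp only [mem_filter] at hx ⊢
            exact ⟨⟨hx.1, hx.2 ▸ ht⟩, hx.2⟩
    _ ≤ #(univ : Finset (ι × G.Dart)) := card_filter_le _ _
    _ = Fintype.card ι * (2 * #G.edgeFinset) := by
        rw [card_univ, Fintype.card_prod, dart_card_eq_twice_card_edges]

end SimpleGraph

theorem card_triangles_le_of_forest_partition_general {V : Type*} [Fintype V] [DecidableEq V]
    (G : SimpleGraph V) [DecidableRel G.Adj] (k : ℕ) (F : Fin k → Set (Sym2 V))
    (hunion : ⋃ i, F i = G.edgeSet)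
    (hforest : ∀ i, (SimpleGraph.fromEdgeSet (F i)).IsAcyclic) :
    ((G.cliqueFinset 3).card : ℝ)
      ≤ 2 / 3 * (k : ℝ) * (G.edgeFinset.card : ℝ) := by
  choose parent hparent using fun i ↦ (hforest i).exists_parent
  have hcover : ∀ ⦃u v⦄, G.Adj u v → ∃ i, v = parent i u ∨ u = parent i v := by
    intro u v huv
    obtain ⟨i, hi⟩ := Set.mem_iUnion.1 (hunion ▸ huv : s(u, v) ∈ ⋃ i, F i)
    exact ⟨i, hparent i ((SimpleGraph.fromEdgeSet_adj _).2 ⟨hi, huv.ne⟩)⟩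
  have hcount := G.three_mul_card_cliqueFinset_three_le parent hcover
  rw [Fintype.card_fin] at hcount
  have hcount' : (3 * #(G.cliqueFinset 3) : ℝ) ≤ k * (2 * #G.edgeFinset) := by
    exact_mod_cast hcount
  linarith

/-- If the edge set of a finite simple graph `G` with `m` edges can be partitioned into
`k` forests, then `G` has at most `(2/3) * k * m` triangles. -/
theorem card_triangles_le_of_forest_partition {V : Type*} [Fintype V] [DecidableEq V]
    (G : SimpleGraph V) [DecidableRel G.Adj] (k : ℕ) (F : Fin k → Set (Sym2 V))
    (hdisj : Pairwise (Function.onFun Disjoint F))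
    (hunion : ⋃ i, F i = G.edgeSet)
    (hforest : ∀ i, (SimpleGraph.fromEdgeSet (F i)).IsAcyclic) :
    ((G.cliqueFinset 3).card : ℝ)
      ≤ 2 / 3 * (k : ℝ) * (G.edgeFinset.card : ℝ) :=
  card_triangles_le_of_forest_partition_general G k F hunion hforest
end

section
/- For every integer k ≥ 1 and every even integer b ≥ 2, there exists a finite simple graph G on n = (2k+1)·b/2 vertices with exactly m = k·C(b,2) + k·b²/2 edges such that the edge set of G can be partitioned into at most b subsets each forming an acyclic subgraph (a forest) on the vertex set of G, and the number of triangles of G is at least k·C(b,3) + k·C(b,2)·(b/2). -/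
/-!
Let `b = 2c`. Take `k` disjoint copies of `K_b` and join every vertex of them to each vertex of
an independent set of `c` apex vertices. A triangle lies inside one copy, or consists of an edge of
a copy and an apex; this gives the triangle count, and the degree sum gives the edge count.

For the `b` forests: for `i < c`, the edges `{x, y}` of a copy with `x + y ≡ 2i` or `2i + 1`
(mod `2c`) form a Hamiltonian zigzag path of that copy, so taking them in all copies gives `c`
forests; the stars centred at the `c` apexes are the other `c` forests. Acyclicity is checked
with a height function under which every vertex has at most one higher neighbour.
-/

open Finset Function

namespace SimpleGraph

variable {V W ι ι' : Type*}

theorem isAcyclic_of_subsingleton_upNeighbors {α : Type*} [LinearOrder α] {G : SimpleGraph V}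
    (h : V → α) (hne : ∀ ⦃v w⦄, G.Adj v w → h v ≠ h w)
    (hup : ∀ v, {w | G.Adj v w ∧ h v < h w}.Subsingleton) : G.IsAcyclic := by
  classical
  -- On a cycle, a vertex of minimal height would have two distinct higher neighbours.
  intro v c hc
  obtain ⟨u, hu, hmin⟩ := c.support.toFinset.exists_min_image h ⟨v, by simp⟩
  rw [List.mem_toFinset] at hu
  have hc' := hc.rotate hu
  have higher : ∀ w, G.Adj u w → w ∈ (c.rotate u hu).support → h u < h w := fun w hadj hw =>
    (hmin w (by simpa using hw)).lt_of_ne (hne hadj)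
  have hsnd := Walk.adj_snd hc'.not_nil
  have hpen := (Walk.adj_penultimate hc'.not_nil).symm
  exact hc'.snd_ne_penultimate <| hup u ⟨hsnd, higher _ hsnd (Walk.getVert_mem_support ..)⟩
    ⟨hpen, higher _ hpen (Walk.getVert_mem_support ..)⟩

def IsForestDecomposition (G : SimpleGraph V) (F : ι → Set (Sym2 V)) : Prop :=
  Pairwise (Disjoint on F) ∧ ⋃ i, F i = G.edgeSet ∧ ∀ i, (fromEdgeSet (F i)).IsAcyclic

namespace IsForestDecomposition

variable {G : SimpleGraph V} {F : ι → Set (Sym2 V)}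

theorem of_graphs {H : ι → SimpleGraph V} (hdisj : Pairwise (Disjoint on H))
    (hsup : ⨆ i, H i = G) (hacyc : ∀ i, (H i).IsAcyclic) :
    G.IsForestDecomposition fun i => (H i).edgeSet :=
  ⟨fun _ _ hij => disjoint_edgeSet.2 (hdisj hij), by rw [← edgeSet_iSup, hsup],
    fun i => by rw [fromEdgeSet_edgeSet]; exact hacyc i⟩

theorem comp_equiv (hF : G.IsForestDecomposition F) (σ : ι' ≃ ι) :
    G.IsForestDecomposition (F ∘ σ) :=
  ⟨hF.1.comp_of_injective σ.injective, by rw [← hF.2.1]; exact σ.surjective.iUnion_comp F,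
    fun i => hF.2.2 (σ i)⟩

theorem map (hF : G.IsForestDecomposition F) (e : V ≃ W) :
    (G.map e).IsForestDecomposition fun i => Sym2.map e '' F i := by
  refine ⟨fun i j hij => (Set.disjoint_image_iff (Sym2.map.injective e.injective)).2 (hF.1 hij),
    by rw [← Set.image_iUnion, hF.2.1, ← Equiv.coe_toEmbedding, edgeSet_map]; rfl,
    fun i => ?_⟩
  refine IsAcyclic.comap (G' := fromEdgeSet (F i)) ⟨e.symm, ?_⟩ e.symm.injective (hF.2.2 i)
  rintro u v ⟨⟨f, hf, hfuv⟩, hne⟩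
  refine ⟨?_, e.symm.injective.ne hne⟩
  change s(e.symm u, e.symm v) ∈ F i
  rwa [← Sym2.map_mk, ← hfuv, Sym2.map_map, Equiv.symm_comp_self, Sym2.map_id]

end IsForestDecomposition

theorem ncard_edgeSet_map_equiv (G : SimpleGraph V) (e : V ≃ W) :
    (G.map e).edgeSet.ncard = G.edgeSet.ncard := by
  rw [← Equiv.coe_toEmbedding, edgeSet_map,
    Set.ncard_image_of_injective _ e.toEmbedding.sym2Map.injective]

theorem ncard_cliqueSet_map_equiv (G : SimpleGraph V) (e : V ≃ W) (n : ℕ) :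
    ((G.map e).cliqueSet n).ncard = (G.cliqueSet n).ncard := by
  rw [cliqueSet_map_of_equiv, Set.ncard_image_of_injective _ (Finset.map_injective _)]

variable {α β γ : Type*}

def cliquesJoin (α β γ : Type*) : SimpleGraph ((α × β) ⊕ γ) where
  Adj
    | .inl p, .inl q => p.1 = q.1 ∧ p.2 ≠ q.2
    | .inl _, .inr _ | .inr _, .inl _ => True
    | .inr _, .inr _ => False
  symm := ⟨by
    rintro (p | j) (q | j') h
    exacts [⟨h.1.symm, h.2.symm⟩, trivial, trivial, h]⟩
  loopless := ⟨by rintro (p | j) h; exacts [h.2 rfl, h]⟩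

@[simp] theorem cliquesJoin_adj_inl_inl {p q : α × β} :
    (cliquesJoin α β γ).Adj (.inl p) (.inl q) ↔ p.1 = q.1 ∧ p.2 ≠ q.2 := .rfl

@[simp] theorem cliquesJoin_adj_inl_inr {p : α × β} {j : γ} :
    (cliquesJoin α β γ).Adj (.inl p) (.inr j) := trivial

@[simp] theorem cliquesJoin_adj_inr_inl {p : α × β} {j : γ} :
    (cliquesJoin α β γ).Adj (.inr j) (.inl p) := trivial

@[simp] theorem cliquesJoin_not_adj_inr_inr {j j' : γ} :
    ¬ (cliquesJoin α β γ).Adj (.inr j) (.inr j') := id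

instance [DecidableEq α] [DecidableEq β] : DecidableRel (cliquesJoin α β γ).Adj
  | .inl _, .inl _ => decidable_of_iff _ cliquesJoin_adj_inl_inl.symm
  | .inl _, .inr _ => .isTrue trivial
  | .inr _, .inl _ => .isTrue trivial
  | .inr _, .inr _ => .isFalse id

section Degrees

variable [Fintype α] [Fintype β] [Fintype γ] [DecidableEq α] [DecidableEq β]

theorem degree_cliquesJoin_inl (p : α × β) :
    (cliquesJoin α β γ).degree (.inl p) = (Fintype.card β - 1) + Fintype.card γ := by
  have : (cliquesJoin α β γ).neighborFinset (.inl p) =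
      ({p.1} ×ˢ univ.erase p.2).disjSum univ := by
    ext (q | j) <;> simp only [mem_neighborFinset, inl_mem_disjSum, inr_mem_disjSum, mem_product,
      mem_singleton, mem_erase, mem_univ, cliquesJoin_adj_inl_inl, cliquesJoin_adj_inl_inr]
    simp only [ne_eq, eq_comm, and_true]
  rw [← card_neighborFinset_eq_degree, this, card_disjSum, card_product,
    card_erase_of_mem (mem_univ _), card_singleton, one_mul, card_univ, card_univ]

theorem degree_cliquesJoin_inr (j : γ) :
    (cliquesJoin α β γ).degree (.inr j) = Fintype.card α * Fintype.card β := by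
  have : (cliquesJoin α β γ).neighborFinset (.inr j) = univ.disjSum ∅ := by
    ext (q | j') <;> simp
  rw [← card_neighborFinset_eq_degree, this, card_disjSum, card_empty, add_zero, card_univ,
    Fintype.card_prod]

theorem ncard_edgeSet_cliquesJoin :
    (cliquesJoin α β γ).edgeSet.ncard = Fintype.card α * (Fintype.card β).choose 2 +
      Fintype.card α * Fintype.card β * Fintype.card γ := by
  have hsum := sum_degrees_eq_twice_card_edges (cliquesJoin α β γ)
  simp only [Fintype.sum_sum_type, degree_cliquesJoin_inl, degree_cliquesJoin_inr, sum_const,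
    card_univ, Fintype.card_prod, smul_eq_mul] at hsum
  have hchoose : 2 * (Fintype.card β).choose 2 = Fintype.card β * (Fintype.card β - 1) := by
    rw [Nat.choose_two_right, Nat.mul_div_cancel' (Nat.even_mul_pred_self _).two_dvd]
  rw [← coe_edgeFinset, Set.ncard_coe_finset]
  apply Nat.eq_of_mul_eq_mul_left two_pos
  rw [← hsum]
  linear_combination (Fintype.card α) * hchoose.symm

end Degrees

def blockClique (t : α) (s : Finset β) (J : Finset γ) : Finset ((α × β) ⊕ γ) :=
  (s.map (Embedding.sectR t β)).disjSum J

theorem isNClique_blockClique (t : α) (s : Finset β) {J : Finset γ} (hJ : #J ≤ 1) :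
    (cliquesJoin α β γ).IsNClique (#s + #J) (blockClique t s J) := by
  refine ⟨?_, by simp [blockClique]⟩
  rintro (⟨t₁, x⟩ | j) h₁ (⟨t₂, y⟩ | j') h₂ hne
  · simp only [blockClique, mem_coe, inl_mem_disjSum, mem_map, Embedding.sectR_apply,
      Prod.mk.injEq, exists_eq_right_right, ne_eq, Sum.inl.injEq, not_and,
      cliquesJoin_adj_inl_inl] at h₁ h₂ hne ⊢
    exact ⟨h₁.2.symm.trans h₂.2, hne (h₁.2.symm.trans h₂.2)⟩
  · exact cliquesJoin_adj_inl_inr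
  · exact cliquesJoin_adj_inr_inl
  · simp only [blockClique, mem_coe, inr_mem_disjSum] at h₁ h₂
    exact absurd (card_le_one.1 hJ _ h₁ _ h₂) (by simpa using hne)

theorem blockClique_inj {t t' : α} {s s' : Finset β} {J J' : Finset γ} (hs : s.Nonempty) :
    blockClique t s J = blockClique t' s' J' ↔ t = t' ∧ s = s' ∧ J = J' := by
  refine ⟨fun h => ?_, by rintro ⟨rfl, rfl, rfl⟩; rfl⟩
  obtain ⟨hmap, rfl⟩ := disjSum_inj.1 h
  obtain ⟨x, hx⟩ := hs
  obtain rfl : t = t' := by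
    have : (t, x) ∈ s'.map (Embedding.sectR t' β) := hmap ▸ mem_map_of_mem _ hx
    simp only [mem_map, Embedding.sectR_apply, Prod.mk.injEq, exists_eq_right_right] at this
    exact this.2.symm
  exact ⟨rfl, Finset.map_injective _ hmap, rfl⟩

theorem le_ncard_cliqueSet_three_cliquesJoin [Fintype α] [Fintype β] [Fintype γ]
    [DecidableEq α] [DecidableEq β] [DecidableEq γ] :
    Fintype.card α * (Fintype.card β).choose 3 +
        Fintype.card α * (Fintype.card β).choose 2 * Fintype.card γ ≤
      ((cliquesJoin α β γ).cliqueSet 3).ncard := by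
  set inner := (univ ×ˢ powersetCard 3 univ).image
    fun p : α × Finset β => blockClique p.1 p.2 (∅ : Finset γ)
  set withApex := (univ ×ˢ powersetCard 2 univ ×ˢ univ).image
    fun p : α × Finset β × γ => blockClique p.1 p.2.1 {p.2.2}
  have hinner : #inner = Fintype.card α * (Fintype.card β).choose 3 := by
    rw [card_image_of_injOn, card_product, card_powersetCard, card_univ, card_univ]
    rintro ⟨t, s⟩ hs ⟨t', s'⟩ - h
    have := (blockClique_inj (card_pos.1 (by simp_all))).1 h
    exact Prod.ext this.1 this.2.1
  have hwithApex : #withApex = Fintype.card α * (Fintype.card β).choose 2 * Fintype.card γ := by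
    rw [card_image_of_injOn, card_product, card_product, card_powersetCard, card_univ, card_univ,
      card_univ, mul_assoc]
    rintro ⟨t, s, j⟩ hs ⟨t', s', j'⟩ - h
    have := (blockClique_inj (card_pos.1 (by simp_all))).1 h
    simp_all
  have hdisj : Disjoint inner withApex := by
    simp only [inner, withApex, Finset.disjoint_left, mem_image]
    rintro _ ⟨p, hp, rfl⟩ ⟨q, hq, h⟩
    simpa using ((blockClique_inj (card_pos.1 (by simp_all))).1 h).2.2
  have hsub : ↑(inner ∪ withApex) ⊆ (cliquesJoin α β γ).cliqueSet 3 := by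
    simp only [inner, withApex, coe_union, coe_image, Set.union_subset_iff, Set.image_subset_iff]
    constructor
    · rintro ⟨t, s⟩ hs
      simp only [coe_product, coe_univ, Set.mem_prod, Set.mem_univ, SetLike.mem_coe,
        mem_powersetCard, subset_univ, true_and] at hs
      simpa [hs] using isNClique_blockClique (γ := γ) t s (J := ∅) (by simp)
    · rintro ⟨t, s, j⟩ hs
      simp only [coe_product, coe_univ, Set.mem_prod, Set.mem_univ, SetLike.mem_coe,
        mem_powersetCard, subset_univ, true_and, and_true] at hs
      simpa [hs] using isNClique_blockClique t s (J := {j}) (by simp)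
  calc _ = #(inner ∪ withApex) := by rw [card_union_of_disjoint hdisj, hinner, hwithApex]
    _ = (↑(inner ∪ withApex) : Set _).ncard := (Set.ncard_coe_finset _).symm
    _ ≤ _ := Set.ncard_le_ncard hsub

end SimpleGraph

/-- The position of `m` along the path `0, 1, 2c - 1, 2, 2c - 2, …, c`, whose consecutive
vertices sum to `0` or `1` mod `2c`. -/
def zigzagPos (c m : ℕ) : ℕ :=
  if m = 0 then 0 else if m ≤ c then 2 * m - 1 else 2 * (2 * c - m)

theorem zigzagPos_injOn {c m m' : ℕ} (hm : m < 2 * c) (hm' : m' < 2 * c)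
    (h : zigzagPos c m = zigzagPos c m') : m = m' := by
  unfold zigzagPos at h; split_ifs at h <;> omega

theorem eq_of_zigzagPos_lt {c : ℕ} {z w w' : Fin (2 * c)} (hw : (z + w).val ≤ 1)
    (hw' : (z + w').val ≤ 1) (hlt : zigzagPos c z < zigzagPos c w)
    (hlt' : zigzagPos c z < zigzagPos c w') : w = w' := by
  rw [Fin.val_add_eq_ite] at hw hw'
  apply Fin.ext
  have := z.isLt; have := w.isLt; have := w'.isLt
  unfold zigzagPos at hlt hlt'
  split_ifs at hw hw' hlt hlt' <;> omega

/-- Shifting by `i` carries the `i`-th zigzag path onto the `0`-th one. -/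
theorem Fin.val_sub_add_sub_le_one {c : ℕ} {i : Fin c} {x y : Fin (2 * c)}
    (h : (x + y).val / 2 = i) :
    (x - i.castLE (by omega) + (y - i.castLE (by omega))).val ≤ 1 := by
  have : NeZero (2 * c) := ⟨by have := i.pos; omega⟩
  set i' : Fin (2 * c) := i.castLE (by omega)
  have hsplit : x + y = (x - i' + (y - i')) + (i' + i') := by abel
  have hii : (i' + i').val = 2 * i := by
    rw [Fin.val_add_eq_ite, Fin.val_castLE]; have := i.isLt; split_ifs <;> omega
  rw [hsplit, Fin.val_add_eq_ite, hii] at h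
  have := (x - i' + (y - i')).isLt
  split_ifs at h <;> omega

namespace SimpleGraph

variable {α β γ : Type*}

def zigzagForest (c : ℕ) (i : Fin c) : SimpleGraph ((α × Fin (2 * c)) ⊕ γ) where
  Adj
    | .inl p, .inl q => p.1 = q.1 ∧ p.2 ≠ q.2 ∧ (p.2 + q.2).val / 2 = i
    | _, _ => False
  symm := ⟨by
    rintro (p | j) (q | j') h
    exacts [⟨h.1.symm, h.2.1.symm, add_comm p.2 q.2 ▸ h.2.2⟩, h, h, h]⟩
  loopless := ⟨by rintro (p | j) h; exacts [h.2.1 rfl, h]⟩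

def apexStar (j : γ) : SimpleGraph ((α × β) ⊕ γ) where
  Adj
    | .inl _, .inr j' | .inr j', .inl _ => j' = j
    | _, _ => False
  symm := ⟨by rintro (p | j) (q | j') h <;> exact h⟩
  loopless := ⟨by rintro (p | j) h <;> exact h⟩

@[simp] theorem zigzagForest_adj_inl_inl {c : ℕ} {i : Fin c} {p q : α × Fin (2 * c)} :
    (zigzagForest (γ := γ) c i).Adj (.inl p) (.inl q) ↔
      p.1 = q.1 ∧ p.2 ≠ q.2 ∧ (p.2 + q.2).val / 2 = i := .rfl

@[simp] theorem zigzagForest_not_adj_inr_left {c : ℕ} {i : Fin c} {j : γ} {v} :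
    ¬ (zigzagForest (α := α) c i).Adj (.inr j) v := by cases v <;> exact id

@[simp] theorem zigzagForest_not_adj_inr_right {c : ℕ} {i : Fin c} {j : γ} {v} :
    ¬ (zigzagForest (α := α) c i).Adj v (.inr j) := by cases v <;> exact id

@[simp] theorem apexStar_adj_inl_inr {j j' : γ} {p : α × β} :
    (apexStar j).Adj (.inl p) (.inr j') ↔ j' = j := .rfl

@[simp] theorem apexStar_adj_inr_inl {j j' : γ} {p : α × β} :
    (apexStar j).Adj (.inr j') (.inl p) ↔ j' = j := .rfl

@[simp] theorem apexStar_not_adj_inl_inl {j : γ} {p q : α × β} :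
    ¬ (apexStar j).Adj (.inl p) (.inl q) := id

@[simp] theorem apexStar_not_adj_inr_inr {j j₁ j₂ : γ} :
    ¬ (apexStar (α := α) (β := β) j).Adj (.inr j₁) (.inr j₂) := id

theorem isAcyclic_zigzagForest {c : ℕ} (i : Fin c) :
    (zigzagForest (α := α) (γ := γ) c i).IsAcyclic := by
  have : NeZero (2 * c) := ⟨by have := i.pos; omega⟩
  set i' : Fin (2 * c) := i.castLE (by omega)
  refine isAcyclic_of_subsingleton_upNeighbors
    (Sum.elim (fun p => zigzagPos c (p.2 - i' : Fin (2 * c))) 0) ?_ ?_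
  · rintro (⟨t, x⟩ | _) (⟨s, y⟩ | _) h heq <;> simp only [zigzagForest_adj_inl_inl,
      zigzagForest_not_adj_inr_left, zigzagForest_not_adj_inr_right] at h
    exact h.2.1 (sub_left_injective (Fin.ext (zigzagPos_injOn (Fin.isLt _) (Fin.isLt _) heq)))
  · rintro (⟨t, x⟩ | _) (⟨s, y⟩ | _) ⟨h, hlt⟩ (⟨s', y'⟩ | _) ⟨h', hlt'⟩ <;>
      simp only [zigzagForest_adj_inl_inl, zigzagForest_not_adj_inr_left,
        zigzagForest_not_adj_inr_right] at h h'
    have hy : y = y' := sub_left_injective <| eq_of_zigzagPos_lt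
      (Fin.val_sub_add_sub_le_one h.2.2) (Fin.val_sub_add_sub_le_one h'.2.2) hlt hlt'
    rw [← h.1, ← h'.1, hy]

theorem isAcyclic_apexStar (j : γ) : (apexStar (α := α) (β := β) j).IsAcyclic := by
  refine isAcyclic_of_subsingleton_upNeighbors
    (Sum.elim (fun _ => 0) (fun _ => 1) : _ → ℕ) ?_ ?_
  · rintro (_ | _) (_ | _) h <;> simp_all
  · rintro (_ | _) (_ | j₁) ⟨h₁, hlt₁⟩ (_ | j₂) ⟨h₂, hlt₂⟩ <;> simp_all

theorem iSup_zigzagForest_apexStar (c : ℕ) :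
    ⨆ i, Sum.elim (zigzagForest c) apexStar i = cliquesJoin α (Fin (2 * c)) γ := by
  ext (⟨t, x⟩ | j) (⟨s, y⟩ | j') <;> simp [iSup_adj]
  exact fun _ _ => ⟨⟨(x + y).val / 2, by have := (x + y).isLt; omega⟩, rfl⟩

theorem pairwise_disjoint_zigzagForest_apexStar (c : ℕ) :
    Pairwise (Disjoint on Sum.elim (zigzagForest (α := α) (γ := γ) c) apexStar) := by
  rintro (i | j) (i' | j') hne <;> rw [onFun, SimpleGraph.disjoint_left]
  all_goals rintro (⟨t, x⟩ | j) (⟨s, y⟩ | j') h h'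
  all_goals simp_all
  exact hne (Fin.ext h')

theorem isForestDecomposition_cliquesJoin (c : ℕ) :
    (cliquesJoin α (Fin (2 * c)) γ).IsForestDecomposition
      fun i => (Sum.elim (zigzagForest c) apexStar i).edgeSet :=
  .of_graphs (pairwise_disjoint_zigzagForest_apexStar c) (iSup_zigzagForest_apexStar c)
    (Sum.rec isAcyclic_zigzagForest isAcyclic_apexStar)

end SimpleGraph

open SimpleGraph

theorem exists_graph_arboricity_many_triangles_general (k b : ℕ) (hbe : 2 ∣ b) :
    ∃ G : SimpleGraph (Fin ((2 * k + 1) * b / 2)),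
      G.edgeSet.ncard = k * b.choose 2 + k * (b ^ 2 / 2) ∧
      (∃ F : Fin b → Set (Sym2 (Fin ((2 * k + 1) * b / 2))),
        Pairwise (Function.onFun Disjoint F) ∧
        ⋃ i, F i = G.edgeSet ∧
        ∀ i, (SimpleGraph.fromEdgeSet (F i)).IsAcyclic) ∧
      k * b.choose 3 + k * b.choose 2 * (b / 2) ≤ (G.cliqueSet 3).ncard := by
  obtain ⟨c, rfl⟩ := hbe
  have hcard : Fintype.card ((Fin k × Fin (2 * c)) ⊕ Fin c) = (2 * k + 1) * (2 * c) / 2 := by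
    rw [Fintype.card_sum, Fintype.card_prod, Fintype.card_fin, Fintype.card_fin, Fintype.card_fin,
      show (2 * k + 1) * (2 * c) = 2 * (k * (2 * c) + c) by ring, Nat.mul_div_cancel_left _ two_pos]
  let e := Fintype.equivFinOfCardEq hcard
  let σ : Fin (2 * c) ≃ Fin c ⊕ Fin c := (finCongr (two_mul c)).trans finSumFinEquiv.symm
  refine ⟨(cliquesJoin (Fin k) (Fin (2 * c)) (Fin c)).map e, ?_,
    ⟨_, ((isForestDecomposition_cliquesJoin c).comp_equiv σ).map e⟩, ?_⟩
  · rw [ncard_edgeSet_map_equiv, ncard_edgeSet_cliquesJoin, show (2 * c) ^ 2 / 2 = 2 * c * c from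
      Nat.div_eq_of_eq_mul_left two_pos (by ring)]
    simp only [Fintype.card_fin]
    ring
  · rw [ncard_cliqueSet_map_equiv, show 2 * c / 2 = c by omega]
    simpa using le_ncard_cliqueSet_three_cliquesJoin (α := Fin k) (β := Fin (2 * c)) (γ := Fin c)

/-- For every `k ≥ 1` and even `b ≥ 2`, there is a simple graph on `(2k+1)·b/2` vertices
with exactly `k·C(b,2) + k·b²/2` edges whose edge set partitions into at most `b` forests
and which has at least `k·C(b,3) + k·C(b,2)·(b/2)` triangles. -/
theorem exists_graph_arboricity_many_triangles (k b : ℕ) (hk : 1 ≤ k) (hb : 2 ≤ b)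
    (hbe : 2 ∣ b) :
    ∃ G : SimpleGraph (Fin ((2 * k + 1) * b / 2)),
      G.edgeSet.ncard = k * b.choose 2 + k * (b ^ 2 / 2) ∧
      (∃ F : Fin b → Set (Sym2 (Fin ((2 * k + 1) * b / 2))),
        Pairwise (Function.onFun Disjoint F) ∧
        ⋃ i, F i = G.edgeSet ∧
        ∀ i, (SimpleGraph.fromEdgeSet (F i)).IsAcyclic) ∧
      k * b.choose 3 + k * b.choose 2 * (b / 2) ≤ (G.cliqueSet 3).ncard :=
  exists_graph_arboricity_many_triangles_general k b hbe
end

section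
/- Let G be a finite simple triangle-free graph on n vertices. Then G contains an independent set of size at least ⌊√n⌋. -/
/-!
Induction on `k`: if `k ^ 2 ≤ |W|`, then `W` contains an independent set of size `k`. Pick
`v ∈ W`. In a triangle-free graph the neighbourhood of `v` is independent, so either `v` has at
least `k` neighbours in `W`, or deleting `v` and its neighbours removes at most `k` vertices,
leaving at least `k ^ 2 - k ≥ (k - 1) ^ 2` of them; an independent set of size `k - 1` there
extends by `v`.
-/

open Finset

namespace SimpleGraph

variable {V : Type*} {G : SimpleGraph V}

theorem IsIndepSet.insert {s : Set V} {a : V} (hs : G.IsIndepSet s) (h : ∀ b ∈ s, ¬G.Adj a b) :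
    G.IsIndepSet (insert a s) :=
  Set.Pairwise.insert hs fun b hb _ => ⟨h b hb, fun hba => h b hb hba.symm⟩

theorem CliqueFree.exists_isIndepSet_subset_of_sq_le_card (hG : G.CliqueFree 3) (k : ℕ)
    (W : Finset V) (hW : k ^ 2 ≤ #W) : ∃ s ⊆ W, k ≤ #s ∧ G.IsIndepSet (s : Set V) := by
  classical
  induction k generalizing W with
  | zero => exact ⟨∅, empty_subset W, le_rfl, by simp⟩
  | succ k ih =>
    obtain ⟨v, hv⟩ : W.Nonempty := card_pos.1 (lt_of_lt_of_le (by positivity) hW)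
    set N := W.filter (G.Adj v)
    by_cases hN : k + 1 ≤ #N
    · refine ⟨N, filter_subset _ _, hN, (G.isIndepSet_neighborSet_of_triangleFree hG v).mono
        fun w hw => (mem_filter.1 hw).2⟩
    · set W' := W \ insert v N
      have hW' : k ^ 2 ≤ #W' := by
        have hvN : #(insert v N) ≤ k + 1 := (card_insert_le v N).trans (by omega)
        have hsdiff : #W - #(insert v N) ≤ #W' := le_card_sdiff (insert v N) W
        have hsq : (k + 1) ^ 2 = k ^ 2 + k + (k + 1) := by ring
        omega
      obtain ⟨s, hsW', hks, hs⟩ := ih W' hW'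
      have hvs : v ∉ s := fun h => (mem_sdiff.1 (hsW' h)).2 (mem_insert_self v N)
      refine ⟨insert v s, ?_, ?_, ?_⟩
      · exact insert_subset hv (hsW'.trans sdiff_subset)
      · rw [card_insert_of_notMem hvs]
        omega
      · rw [coe_insert]
        refine hs.insert fun b hb hvb => ?_
        have hb' := mem_sdiff.1 (hsW' hb)
        exact hb'.2 (mem_insert_of_mem (mem_filter.2 ⟨hb'.1, hvb⟩))

end SimpleGraph

theorem indep_set_of_triangle_free_general {V : Type*} [Fintype V]
    (G : SimpleGraph V) (hG : G.CliqueFree 3) :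
    ∃ s : Finset V, Nat.sqrt (Fintype.card V) ≤ s.card ∧
      ∀ u ∈ s, ∀ v ∈ s, u ≠ v → ¬ G.Adj u v := by
  obtain ⟨s, -, hcard, hs⟩ :=
    hG.exists_isIndepSet_subset_of_sq_le_card _ univ (Nat.sqrt_le' (Fintype.card V))
  exact ⟨s, hcard, hs⟩

/-- A finite simple triangle-free graph on `n` vertices contains an independent set of size
at least `⌊√n⌋`. -/
theorem indep_set_of_triangle_free {V : Type*} [Fintype V] [DecidableEq V]
    (G : SimpleGraph V) [DecidableRel G.Adj] (hG : G.CliqueFree 3) :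
    ∃ s : Finset V, Nat.sqrt (Fintype.card V) ≤ s.card ∧
      ∀ u ∈ s, ∀ v ∈ s, u ≠ v → ¬ G.Adj u v :=
  indep_set_of_triangle_free_general G hG
end

section
/- Let G be a finite simple graph on a vertex set V of size n with m edges and t triangles, and let p be a real number with 0 ≤ p ≤ 1. For a subset U ⊆ V let w_p(U) = p^{|U|}·(1−p)^{n−|U|} and let t(G[U]) denote the number of triangles of the subgraph of G induced by U. Then the variance of the triangle count, namely (Σ_{U ⊆ V} w_p(U)·t(G[U])²) − (t·p³)², is at most t·p³ + 6·t·m·p⁵ + 6·t·n·p⁴. -/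
/-- The number of triangles of the subgraph of `G` induced by `U`. -/
def inducedTriangleCount {V : Type*} [Fintype V] [DecidableEq V] (G : SimpleGraph V)
    [DecidableRel G.Adj] (U : Finset V) : ℕ :=
  ((G.cliqueFinset 3).filter (fun s => s ⊆ U)).card

/-!
Write the triangle count of `G[U]` as `X = ∑ₛ [s ⊆ U]` over the triangles `s`. Since
`E [A ⊆ U] = p ^ #A`, the variance is `∑ₛ ∑ₜ (p ^ #(s ∪ t) - p ^ 6)`. For a fixed triangle `s`,
the term of a triangle `t` with `#(s ∩ t) = k` is `p ^ (6 - k) - p ^ 6`: it vanishes for `k = 0`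
and is at most `p ^ (6 - k)` otherwise. Such a `t` is determined by `s ∩ t` and the
`(3 - k)`-clique `t \ s`, so there are at most `3 m`, `3 n` and `1` of them for `k = 1, 2, 3`.
-/

open Finset

theorem Finset.sum_superset_pow_mul_pow {α R : Type*} [Fintype α] [DecidableEq α]
    [CommSemiring R] (A : Finset α) (p q : R) :
    ∑ U with A ⊆ U, p ^ #U * q ^ (Fintype.card α - #U) =
      p ^ #A * (p + q) ^ (Fintype.card α - #A) := by
  -- expand `∏ v, (p + [v ∉ A] q)` over the subsets `U` picking the summand `p`
  have key := prod_add (fun _ ↦ p) (fun v ↦ if v ∉ A then q else 0) (univ : Finset α)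
  simp only [prod_const, prod_ite_zero, powerset_univ, ← compl_eq_univ_sdiff,
    mem_compl, not_imp_not, ← subset_iff, card_compl, mul_ite, mul_zero, ← sum_filter] at key
  rw [← key]
  simp only [add_ite, add_zero, prod_ite, prod_const, filter_not, filter_mem_eq_inter, univ_inter,
    ← compl_eq_univ_sdiff, compl_compl, card_compl, mul_comm]

theorem Finset.sum_pow_mul_pow_mul_sq_card_filter_subset {α R : Type*} [Fintype α]
    [DecidableEq α] [CommRing R] (T : Finset (Finset α)) (p : R) :
    ∑ U : Finset α, p ^ #U * (1 - p) ^ (Fintype.card α - #U) * (#{s ∈ T | s ⊆ U} : R) ^ 2 =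
      ∑ s ∈ T, ∑ s' ∈ T, p ^ #(s ∪ s') := by
  have hsq : ∀ U : Finset α, (#{s ∈ T | s ⊆ U} : R) ^ 2 =
      ∑ s ∈ T, ∑ s' ∈ T, if s ∪ s' ⊆ U then 1 else 0 := by
    intro U
    simp only [← sum_boole, sq, sum_mul_sum, ite_zero_mul_ite_zero, one_mul, union_subset_iff]
  simp only [hsq, mul_sum, mul_boole]
  rw [sum_comm]
  refine sum_congr rfl fun s _ ↦ ?_
  rw [sum_comm]
  refine sum_congr rfl fun s' _ ↦ ?_
  rw [← sum_filter, sum_superset_pow_mul_pow]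
  simp

namespace SimpleGraph

variable {V : Type*} [Fintype V] [DecidableEq V] (G : SimpleGraph V) [DecidableRel G.Adj]

theorem card_cliqueFinset_two_le_card_edgeFinset : #(G.cliqueFinset 2) ≤ #G.edgeFinset := by
  refine (card_le_card fun s hs ↦ ?_).trans (card_image_le (f := Sym2.toFinset))
  obtain ⟨hclique, hcard⟩ := mem_cliqueFinset_iff.mp hs
  obtain ⟨a, b, hab, rfl⟩ := card_eq_two.mp hcard
  refine mem_image.mpr ⟨s(a, b), mem_edgeFinset.mpr ?_, Sym2.toFinset_mk_eq⟩
  exact hclique (by simp) (by simp) hab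

theorem card_filter_card_inter_eq_le (s : Finset V) (r k : ℕ) :
    #{t ∈ G.cliqueFinset r | #(s ∩ t) = k} ≤ (#s).choose k * #(G.cliqueFinset (r - k)) := by
  rw [← card_powersetCard, ← card_product]
  refine card_le_card_of_injOn (fun t ↦ (s ∩ t, t \ s)) (fun t ht ↦ ?_) fun t _ t' _ h ↦ ?_
  · obtain ⟨ht, hk⟩ := mem_filter.mp ht
    obtain ⟨hclique, hcard⟩ := mem_cliqueFinset_iff.mp ht
    refine mem_product.mpr ⟨mem_powersetCard.mpr ⟨inter_subset_left, hk⟩, ?_⟩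
    refine mem_cliqueFinset_iff.mpr ⟨hclique.subset ?_, ?_⟩
    · simp
    · rw [card_sdiff, hcard, hk]
  · simp only [Prod.mk.injEq] at h
    rw [← sdiff_union_inter t s, ← sdiff_union_inter t' s, inter_comm t, inter_comm t', h.1, h.2]

theorem sum_pow_card_union_sub_le {p : ℝ} (hp : 0 ≤ p) {s : Finset V}
    (hs : s ∈ G.cliqueFinset 3) :
    ∑ t ∈ G.cliqueFinset 3, (p ^ #(s ∪ t) - p ^ 6) ≤
      p ^ 3 + 3 * #G.edgeFinset * p ^ 5 + 3 * Fintype.card V * p ^ 4 := by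
  have hs3 : #s = 3 := (mem_cliqueFinset_iff.mp hs).card_eq
  have hinter : ∀ t ∈ G.cliqueFinset 3, #(s ∩ t) ∈ range 4 := fun t _ ↦
    mem_range.mpr (Nat.lt_succ_of_le (hs3 ▸ card_le_card inter_subset_left))
  have hfiber (k : ℕ) : ∑ t ∈ G.cliqueFinset 3 with #(s ∩ t) = k, (p ^ #(s ∪ t) - p ^ 6) =
      #{t ∈ G.cliqueFinset 3 | #(s ∩ t) = k} * (p ^ (6 - k) - p ^ 6) := by
    rw [← nsmul_eq_mul, ← sum_const]
    refine sum_congr rfl fun t ht ↦ ?_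
    rw [mem_filter, mem_cliqueFinset_iff] at ht
    obtain ⟨⟨-, ht3⟩, rfl⟩ := ht
    have := card_union_add_card_inter s t
    rw [show #(s ∪ t) = 6 - #(s ∩ t) by omega]
  have hcount (k : ℕ) : #{t ∈ G.cliqueFinset 3 | #(s ∩ t) = k} ≤
      (3 : ℕ).choose k * #(G.cliqueFinset (3 - k)) :=
    hs3 ▸ G.card_filter_card_inter_eq_le s 3 k
  have h1 : (#{t ∈ G.cliqueFinset 3 | #(s ∩ t) = 1} : ℝ) ≤ 3 * #G.edgeFinset := by
    exact_mod_cast (hcount 1).trans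
      (Nat.mul_le_mul_left _ G.card_cliqueFinset_two_le_card_edgeFinset)
  have h2 : (#{t ∈ G.cliqueFinset 3 | #(s ∩ t) = 2} : ℝ) ≤ 3 * Fintype.card V := by
    exact_mod_cast (hcount 2).trans
      (Nat.mul_le_mul_left _ (by simpa using G.card_cliqueFinset_le (n := 1)))
  have h3 : (#{t ∈ G.cliqueFinset 3 | #(s ∩ t) = 3} : ℝ) ≤ 1 := by
    exact_mod_cast (hcount 3).trans (by simpa using G.card_cliqueFinset_le (n := 0))
  rw [← sum_fiberwise_of_maps_to hinter]
  simp only [hfiber, sum_range_succ, sum_range_zero, Nat.sub_zero, sub_self, mul_zero, zero_add,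
    Nat.reduceSub]
  have hc (k : ℕ) : 0 ≤ (#{t ∈ G.cliqueFinset 3 | #(s ∩ t) = k} : ℝ) * p ^ 6 := by positivity
  linarith [hc 1, hc 2, hc 3, mul_le_mul_of_nonneg_right h1 (pow_nonneg hp 5),
    mul_le_mul_of_nonneg_right h2 (pow_nonneg hp 4),
    mul_le_mul_of_nonneg_right h3 (pow_nonneg hp 3)]

end SimpleGraph

theorem variance_induced_triangle_count_le_general {V : Type*} [Fintype V] [DecidableEq V]
    (G : SimpleGraph V) [DecidableRel G.Adj] (p : ℝ) (hp0 : 0 ≤ p) :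
    (∑ U : Finset V, p ^ U.card * (1 - p) ^ (Fintype.card V - U.card)
        * (inducedTriangleCount G U : ℝ) ^ 2)
      - (((G.cliqueFinset 3).card : ℝ) * p ^ 3) ^ 2
      ≤ ((G.cliqueFinset 3).card : ℝ) * p ^ 3
        + 6 * ((G.cliqueFinset 3).card : ℝ) * (G.edgeFinset.card : ℝ) * p ^ 5
        + 6 * ((G.cliqueFinset 3).card : ℝ) * (Fintype.card V : ℝ) * p ^ 4 := by
  unfold inducedTriangleCount
  set T := G.cliqueFinset 3
  have hmean : ((#T : ℝ) * p ^ 3) ^ 2 = ∑ s ∈ T, ∑ _t ∈ T, p ^ 6 := by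
    simp only [sum_const, nsmul_eq_mul]
    ring
  calc _ = ∑ s ∈ T, ∑ t ∈ T, (p ^ #(s ∪ t) - p ^ 6) := by
        simp only [sum_pow_mul_pow_mul_sq_card_filter_subset, hmean, sum_sub_distrib]
    _ ≤ ∑ _s ∈ T, (p ^ 3 + 3 * #G.edgeFinset * p ^ 5 + 3 * Fintype.card V * p ^ 4) :=
        sum_le_sum fun s hs ↦ G.sum_pow_card_union_sub_le hp0 hs
    _ = #T * p ^ 3 + 3 * #T * #G.edgeFinset * p ^ 5 + 3 * #T * Fintype.card V * p ^ 4 := by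
        rw [sum_const, nsmul_eq_mul]
        ring
    _ ≤ _ := by
        gcongr <;> norm_num

/-- The variance of the number of surviving triangles in a random induced subgraph (each
vertex retained independently with probability `p`) is at most
`t·p³ + 6·t·m·p⁵ + 6·t·n·p⁴`. -/
theorem variance_induced_triangle_count_le {V : Type*} [Fintype V] [DecidableEq V]
    (G : SimpleGraph V) [DecidableRel G.Adj] (p : ℝ) (hp0 : 0 ≤ p) (hp1 : p ≤ 1) :
    (∑ U : Finset V, p ^ U.card * (1 - p) ^ (Fintype.card V - U.card)
        * (inducedTriangleCount G U : ℝ) ^ 2)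
      - (((G.cliqueFinset 3).card : ℝ) * p ^ 3) ^ 2
      ≤ ((G.cliqueFinset 3).card : ℝ) * p ^ 3
        + 6 * ((G.cliqueFinset 3).card : ℝ) * (G.edgeFinset.card : ℝ) * p ^ 5
        + 6 * ((G.cliqueFinset 3).card : ℝ) * (Fintype.card V : ℝ) * p ^ 4 :=
  variance_induced_triangle_count_le_general G p hp0
end
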